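/- arXiv:2412.19831 — 2 statements merged into one kernel-verified Lean document; each statement's English description precedes it below -/
import Mathlib

section
/- Let N ≥ 1 be an integer and f a real number with 0 < f < 1/N. Then every complex eigenvalue μ of the simple Leslie matrix L_f of order N satisfies |μ| < 1. -/
/-!
Let `v` be an eigenvector of `L_f` for `μ`. The subdiagonal rows give `v_k = μ v_{k+1}`, so
`v_j = μ^(N-1-j) v_{N-1}` with `v_{N-1} ≠ 0`, and the first row then yields the characteristic
equation `μ^N = f (1 + μ + ⋯ + μ^(N-1))`. If `|μ| ≥ 1`, each `|μ|^k` on the right is at most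
`|μ|^(N-1)`, so `|μ|^N ≤ f N |μ|^(N-1)`, i.e. `|μ| ≤ f N < 1`.
-/

/-- The simple Leslie matrix of order `N` with constant fertility rate `f`:
first row all `f`, subdiagonal entries `1`, all other entries `0`. -/
def leslieSimple (N : ℕ) (f : ℝ) : Matrix (Fin N) (Fin N) ℝ :=
  fun i j => if i.val = 0 then f else if i.val = j.val + 1 then 1 else 0

open Finset Matrix

theorem Matrix.exists_mulVec_eq_smul_of_isRoot_charpoly {K n : Type*} [Field K] [Fintype n]
    [DecidableEq n] {A : Matrix n n K} {μ : K} (h : A.charpoly.IsRoot μ) :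
    ∃ v ≠ 0, A *ᵥ v = μ • v := by
  rw [← Matrix.charpoly_toLin'] at h
  obtain ⟨v, hv⟩ :=
    ((Module.End.hasEigenvalue_iff_isRoot_charpoly _ _).mpr h).exists_hasEigenvector
  exact ⟨v, hv.2, hv.apply_eq_smul⟩

section Leslie

variable {R : Type*} [CommRing R] (φ : ℝ →+* R) {n : ℕ} (f : ℝ) (v : Fin (n + 1) → R)

theorem leslieSimple_map_mulVec_zero :
    ((leslieSimple (n + 1) f).map φ *ᵥ v) 0 = φ f * ∑ j, v j := by
  simp [Matrix.mulVec, dotProduct, leslieSimple, Finset.mul_sum]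

theorem leslieSimple_map_mulVec_succ (i : Fin n) :
    ((leslieSimple (n + 1) f).map φ *ᵥ v) i.succ = v i.castSucc := by
  simp only [Matrix.mulVec, dotProduct, Matrix.map_apply, leslieSimple, Fin.val_succ,
    Nat.add_one_ne_zero, if_false, add_left_inj]
  rw [Finset.sum_eq_single i.castSucc]
  · simp
  · intro j _ hj
    rw [if_neg (fun h => hj (Fin.ext h.symm)), map_zero, zero_mul]
  · simp

variable {μ : R}

theorem leslieSimple_eigenvector_eq_pow_mul_last
    (hv : (leslieSimple (n + 1) f).map φ *ᵥ v = μ • v) (j : Fin (n + 1)) :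
    v j = μ ^ (n - j) * v (Fin.last n) := by
  induction j using Fin.reverseInduction with
  | last => simp
  | cast i ih =>
    have hrow := leslieSimple_map_mulVec_succ φ f v i
    rw [hv, Pi.smul_apply, smul_eq_mul] at hrow
    rw [← hrow, ih, ← mul_assoc, ← pow_succ', Fin.val_succ, Fin.val_castSucc]
    congr 2
    omega

theorem leslieSimple_eigenvalue_pow_succ_eq_mul_sum [IsDomain R]
    (hv : (leslieSimple (n + 1) f).map φ *ᵥ v = μ • v) (hv0 : v ≠ 0) :
    μ ^ (n + 1) = φ f * ∑ k ∈ range (n + 1), μ ^ k := by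
  have hv' := leslieSimple_eigenvector_eq_pow_mul_last φ f v hv
  have hlast : v (Fin.last n) ≠ 0 := fun h => hv0 (funext fun j => by simp [hv' j, h])
  have hrow := leslieSimple_map_mulVec_zero φ f v
  rw [hv, Pi.smul_apply, smul_eq_mul] at hrow
  have hsum : ∑ j, v j = (∑ k ∈ range (n + 1), μ ^ k) * v (Fin.last n) := by
    rw [Fintype.sum_congr _ _ hv',
      Fin.sum_univ_eq_sum_range (fun k => μ ^ (n - k) * v (Fin.last n)), Finset.sum_mul,
      ← Finset.sum_range_reflect (fun k => μ ^ k * v (Fin.last n))]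
    simp
  refine mul_right_cancel₀ hlast ?_
  rw [mul_assoc, ← hsum, ← hrow, hv' 0, pow_succ', mul_assoc]
  simp

end Leslie

theorem norm_le_of_pow_succ_eq_mul_sum_pow {K : Type*} [NormedDivisionRing K] {μ c : K}
    {n : ℕ} (h : μ ^ (n + 1) = c * ∑ k ∈ range (n + 1), μ ^ k) (hμ : 1 ≤ ‖μ‖) :
    ‖μ‖ ≤ ‖c‖ * (n + 1) := by
  have hpow : 0 < ‖μ‖ ^ n := by positivity
  have hsum : ∑ k ∈ range (n + 1), ‖μ‖ ^ k ≤ (n + 1) * ‖μ‖ ^ n := by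
    calc ∑ k ∈ range (n + 1), ‖μ‖ ^ k ≤ ∑ _k ∈ range (n + 1), ‖μ‖ ^ n :=
          sum_le_sum fun k hk => pow_le_pow_right₀ hμ (Nat.lt_succ_iff.mp (mem_range.mp hk))
      _ = (n + 1) * ‖μ‖ ^ n := by simp
  refine le_of_mul_le_mul_right ?_ hpow
  calc ‖μ‖ * ‖μ‖ ^ n = ‖c * ∑ k ∈ range (n + 1), μ ^ k‖ := by rw [← h, norm_pow, pow_succ']
    _ ≤ ‖c‖ * ∑ k ∈ range (n + 1), ‖μ‖ ^ k := by
      rw [norm_mul]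
      gcongr
      exact (norm_sum_le _ _).trans_eq (by simp [norm_pow])
    _ ≤ ‖c‖ * (n + 1) * ‖μ‖ ^ n := by rw [mul_assoc]; gcongr

/-- If `N ≥ 1` and `0 < f < 1/N`, then every complex eigenvalue of the simple Leslie
matrix `L_f` (i.e., every root of its characteristic polynomial over `ℂ`) has modulus
strictly less than `1`. -/
theorem leslie_eigenvalues_lt_one (N : ℕ) (hN : 1 ≤ N) (f : ℝ) (hf0 : 0 < f)
    (hf : f < 1 / (N : ℝ)) :
    ∀ μ : ℂ, ((leslieSimple N f).map (Complex.ofReal ·)).charpoly.IsRoot μ →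
      ‖μ‖ < 1 := by
  intro μ hμ
  obtain ⟨n, rfl⟩ : ∃ n, N = n + 1 := ⟨N - 1, by omega⟩
  obtain ⟨v, hv0, hv⟩ := Matrix.exists_mulVec_eq_smul_of_isRoot_charpoly hμ
  have hchar := leslieSimple_eigenvalue_pow_succ_eq_mul_sum Complex.ofRealHom f v hv hv0
  have hfn : f * (n + 1) < 1 := by
    rwa [lt_div_iff₀ (by positivity), Nat.cast_succ] at hf
  by_contra! h
  have hle := norm_le_of_pow_succ_eq_mul_sum_pow hchar h
  rw [Complex.ofRealHom_eq_coe, Complex.norm_real, Real.norm_of_nonneg hf0.le] at hle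
  linarith
end

section
/- Let N ≥ 1 be an integer and f a real number with f ≥ 1/N. Then every complex eigenvalue μ of the simple Leslie matrix L_f of order N satisfies |μ| < 1 + f, and L_f has a real eigenvalue λ with λ ≥ 1 + f − 1/N. -/
/-!
An eigenvector `v` of `L_f` is forced by the subdiagonal rows to be `v_j = μ ^ (N - 1 - j)`
up to scaling, and the first row then says that `μ` is a root of
`p(x) = x ^ N - f (x ^ (N - 1) + ⋯ + x + 1)`. Multiplying by `x - 1` turns the geometric sum
into `x ^ N - 1`: if `|μ| ≥ 1 + f` this gives `|μ| ^ N ≤ f ∑ |μ| ^ k ≤ |μ| ^ N - 1`, which is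
absurd. For the real root, `p(1 + f) = 1 > 0`, while at `x = 1 + f - 1/N ≥ 1` the same identity
gives `f ∑ x ^ k = x ^ N - 1 + (1/N) ∑ x ^ k ≥ x ^ N`, since each of the `N` terms is at least `1`;
the intermediate value theorem does the rest.
-/

open Polynomial Finset Matrix

theorem Matrix.isRoot_charpoly_iff_exists_mulVec_eq_smul {n R : Type*} [Fintype n]
    [DecidableEq n] [CommRing R] [IsDomain R] (A : Matrix n n R) (μ : R) :
    A.charpoly.IsRoot μ ↔ ∃ v ≠ 0, A *ᵥ v = μ • v := by
  rw [IsRoot, eval_charpoly, ← exists_mulVec_eq_zero_iff]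
  simp only [sub_mulVec, scalar_apply, diagonal_const_mulVec, sub_eq_zero, eq_comm]

theorem Fin.sum_pow_sub_eq_sum_range_pow {R : Type*} [Semiring R] (μ : R)
    (n : ℕ) : ∑ j : Fin (n + 1), μ ^ (n - j) = ∑ k ∈ range (n + 1), μ ^ k := by
  rw [Fin.sum_univ_eq_sum_range (fun j => μ ^ (n - j)), ← sum_range_reflect]
  exact sum_congr rfl fun k hk => by rw [mem_range] at hk; congr 1; omega

theorem Fin.eq_pow_mul_last_of_castSucc_eq_mul_succ {M : Type*} [Monoid M] {n : ℕ}
    {v : Fin (n + 1) → M} {μ : M} (h : ∀ i : Fin n, v i.castSucc = μ * v i.succ)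
    (j : Fin (n + 1)) : v j = μ ^ (n - j) * v (last n) := by
  induction j using Fin.reverseInduction with
  | last => simp
  | cast i ih =>
    rw [h, ih, ← mul_assoc, ← pow_succ']
    congr 2
    simp only [val_succ, val_castSucc]
    omega

section Leslie

variable {n : ℕ} {f : ℝ}

theorem leslieSimple_mulVec_zero (v : Fin (n + 1) → ℂ) :
    ((leslieSimple (n + 1) f).map (Complex.ofReal ·) *ᵥ v) 0 = f * ∑ j, v j := by
  simp [mulVec, dotProduct, leslieSimple, mul_sum]

theorem leslieSimple_mulVec_succ (v : Fin (n + 1) → ℂ) (i : Fin n) :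
    ((leslieSimple (n + 1) f).map (Complex.ofReal ·) *ᵥ v) i.succ = v i.castSucc := by
  have hcol : ∀ j : Fin (n + 1), ((i : ℕ) = j) ↔ i.castSucc = j := fun j => by simp [Fin.ext_iff]
  simp [mulVec, dotProduct, leslieSimple, hcol, apply_ite (Complex.ofReal ·), ite_mul]

theorem isRoot_charpoly_leslieSimple_iff (μ : ℂ) :
    ((leslieSimple (n + 1) f).map (Complex.ofReal ·)).charpoly.IsRoot μ ↔
      μ ^ (n + 1) = f * ∑ k ∈ range (n + 1), μ ^ k := by
  rw [isRoot_charpoly_iff_exists_mulVec_eq_smul]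
  constructor
  · rintro ⟨v, hv, hLv⟩
    have hv_eq := Fin.eq_pow_mul_last_of_castSucc_eq_mul_succ fun i => by
      simpa [leslieSimple_mulVec_succ] using congrFun hLv i.succ
    have hlast : v (Fin.last n) ≠ 0 := fun h => hv (funext fun j => by simp [hv_eq j, h])
    have hrow := congrFun hLv 0
    rw [leslieSimple_mulVec_zero, sum_congr rfl fun j _ => hv_eq j, ← sum_mul,
      Fin.sum_pow_sub_eq_sum_range_pow, Pi.smul_apply, hv_eq 0] at hrow
    simp only [Fin.val_zero, Nat.sub_zero, smul_eq_mul] at hrow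
    rw [pow_succ']
    apply mul_right_cancel₀ hlast
    linear_combination -hrow
  · intro hμ
    refine ⟨fun j => μ ^ (n - j), fun h => by simpa using congrFun h (Fin.last n), ?_⟩
    ext i
    induction i using Fin.cases with
    | zero => simp [leslieSimple_mulVec_zero, Fin.sum_pow_sub_eq_sum_range_pow, ← hμ, pow_succ']
    | succ i =>
      rw [leslieSimple_mulVec_succ, Pi.smul_apply, smul_eq_mul, ← pow_succ']
      congr 1
      simp only [Fin.val_succ, Fin.val_castSucc]
      omega

end Leslie

theorem norm_lt_one_add_norm_of_pow_eq_mul_geom_sum {K : Type*} [NormedDivisionRing K]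
    {μ c : K} {N : ℕ} (h : μ ^ N = c * ∑ k ∈ range N, μ ^ k) : ‖μ‖ < 1 + ‖c‖ := by
  by_contra! hμ
  have : ‖μ‖ ^ N < ‖μ‖ ^ N := calc
    ‖μ‖ ^ N = ‖c * ∑ k ∈ range N, μ ^ k‖ := by rw [← h, norm_pow]
    _ ≤ ‖c‖ * ∑ k ∈ range N, ‖μ‖ ^ k := by
      rw [norm_mul]
      gcongr
      exact (norm_sum_le _ _).trans_eq (sum_congr rfl fun k _ => norm_pow μ k)
    _ ≤ (‖μ‖ - 1) * ∑ k ∈ range N, ‖μ‖ ^ k := by gcongr; linarith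
    _ = ‖μ‖ ^ N - 1 := by rw [mul_comm, geom_sum_mul]
    _ < ‖μ‖ ^ N := by linarith
  exact this.false

theorem pow_le_mul_geom_sum {x : ℝ} {N : ℕ} (hN : N ≠ 0) (hx : 1 ≤ x) :
    x ^ N ≤ (x - 1 + 1 / N) * ∑ k ∈ range N, x ^ k := by
  have hS : 1 ≤ (∑ k ∈ range N, x ^ k) / N := by
    rw [le_div_iff₀ (Nat.cast_pos.2 (Nat.pos_of_ne_zero hN))]
    simpa using card_nsmul_le_sum (range N) (x ^ ·) 1 fun k _ => one_le_pow₀ hx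
  rw [add_mul, mul_comm (x - 1), geom_sum_mul, one_div_mul_eq_div]
  linarith

theorem exists_pow_eq_mul_geom_sum {N : ℕ} (hN : N ≠ 0) {f : ℝ} (hf : 1 / (N : ℝ) ≤ f) :
    ∃ x : ℝ, 1 + f - 1 / N ≤ x ∧ x ^ N = f * ∑ k ∈ range N, x ^ k := by
  let p : ℝ → ℝ := fun x => x ^ N - f * ∑ k ∈ range N, x ^ k
  have hlow : p (1 + f - 1 / N) ≤ 0 := by
    have h := pow_le_mul_geom_sum hN (x := 1 + f - 1 / N) (by linarith)
    rw [show 1 + f - 1 / N - 1 + 1 / N = f by ring] at h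
    exact sub_nonpos.2 h
  have hhigh : p (1 + f) = 1 := by linear_combination -(geom_sum_mul (1 + f) N)
  have hle : 1 + f - 1 / N ≤ 1 + f := by linarith [show (0 : ℝ) ≤ 1 / N by positivity]
  obtain ⟨x, hx, hpx⟩ := intermediate_value_Icc hle (by fun_prop : Continuous p).continuousOn
    ⟨hlow, hhigh.symm ▸ zero_le_one⟩
  exact ⟨x, hx.1, sub_eq_zero.1 hpx⟩

/-- If `N ≥ 1` and `f ≥ 1/N`, then every complex eigenvalue `μ` of the simple Leslie
matrix `L_f` satisfies `|μ| < 1 + f`, and `L_f` has a real eigenvalue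
`λ ≥ 1 + f - 1/N`.  (Complex eigenvalues are the roots of the characteristic
polynomial.) -/
theorem leslie_eigenvalue_bounds (N : ℕ) (hN : 1 ≤ N) (f : ℝ) (hf : 1 / (N : ℝ) ≤ f) :
    (∀ μ : ℂ, ((leslieSimple N f).map (Complex.ofReal ·)).charpoly.IsRoot μ →
      ‖μ‖ < 1 + f) ∧
    (∃ lam : ℝ, ((leslieSimple N f).map (Complex.ofReal ·)).charpoly.IsRoot (lam : ℂ) ∧
      1 + f - 1 / (N : ℝ) ≤ lam) := by
  obtain ⟨lam, hlam, hroot⟩ := exists_pow_eq_mul_geom_sum (by omega) hf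
  obtain ⟨n, rfl⟩ : ∃ n, N = n + 1 := ⟨N - 1, by omega⟩
  have hf0 : 0 ≤ f := le_trans (by positivity) hf
  refine ⟨fun μ hμ => ?_,
    lam, (isRoot_charpoly_leslieSimple_iff _).2 (by exact_mod_cast hroot), hlam⟩
  simpa [Real.norm_of_nonneg hf0] using
    norm_lt_one_add_norm_of_pow_eq_mul_geom_sum ((isRoot_charpoly_leslieSimple_iff μ).1 hμ)
end
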